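/- arXiv:1705.01980 — 5 statements merged into one kernel-verified Lean document; each statement's English description precedes it below -/
import Mathlib

section
/- Let q ≠ 0, 1 and α ≠ 0. Define f(s) = q^{-s/2} α^{1/2} - q^{s/2} α^{-1/2}, and let h_j be the continuous q^{-1}-Hermite polynomials defined by 2x h_j(x|q) = h_{j+1}(x|q) + (q^{-j} - 1) h_{j-1}(x|q), h_{-1} = 0, h_0 = 1. Then for all integers n ≥ 0: (α^n / q^{n(n+1)/2}) · Σ_{j=0}^n (-1)^j · binom_q(n,j) · q^{j(j+1)/2} · (qα)^{-j/2} · h_j( f(1)/2 | q ) = 1, where binom_q(n,j) = (q;q)_n / ((q;q)_{n-j} (q;q)_j) is the q-binomial coefficient. -/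
/-!
Put `q = p²`, `β = b²` and `a_j = (-1)^j p^{j(j+1)} (pb)^{-j} h_j(f(1)/2)`, so that the sum is the
`q`-binomial transform `S_n = Σ_j binom_q(n,j) a_j`. The Hermite recurrence becomes a three-term
recurrence for `a_j`; combined with `q`-Pascal and the absorption identity
`(1 - q^{k+1}) binom_q(n+1,k+1) = (1 - q^{n+1}) binom_q(n,k)` it gives
`S_{n+2} - (q^{n+2}/β) S_{n+1} = (1 - q^{n+1}) (S_{n+1} - (q^{n+1}/β) S_n)`.
Since `S_1 = (q/β) S_0`, this forces `S_{n+1} = (q^{n+1}/β) S_n`, hence `S_n = q^{n(n+1)/2} β^{-n}`.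
-/

open Finset

/-- The `q`-Pochhammer symbol `(a;q)_n = ∏_{i=0}^{n-1} (1 - a q^i)`. -/
noncomputable def qPoch (a q : ℝ) (n : ℕ) : ℝ := ∏ i ∈ Finset.range n, (1 - a * q ^ i)

lemma qPoch_succ (a q : ℝ) (n : ℕ) : qPoch a q (n + 1) = qPoch a q n * (1 - a * q ^ n) :=
  prod_range_succ _ _

lemma qPoch_zero (a q : ℝ) : qPoch a q 0 = 1 := prod_range_zero _

/-- For `k > n` the subtraction `n - k` truncates, so this is not `0` there. -/
noncomputable def qBinom (q : ℝ) (n k : ℕ) : ℝ :=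
  qPoch q q n / (qPoch q q (n - k) * qPoch q q k)

section qBinom

variable {q : ℝ}

lemma one_sub_pow_succ_ne_zero (hq : ∀ m, qPoch q q m ≠ 0) (m : ℕ) : 1 - q ^ (m + 1) ≠ 0 := by
  have h := hq (m + 1)
  rw [qPoch_succ, ← pow_succ'] at h
  exact right_ne_zero_of_mul h

lemma qBinom_zero_right (hq : ∀ m, qPoch q q m ≠ 0) (n : ℕ) : qBinom q n 0 = 1 := by
  rw [qBinom, Nat.sub_zero, qPoch_zero, mul_one, div_self (hq n)]

lemma qBinom_self (hq : ∀ m, qPoch q q m ≠ 0) (n : ℕ) : qBinom q n n = 1 := by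
  rw [qBinom, Nat.sub_self, qPoch_zero, one_mul, div_self (hq n)]

lemma qBinom_succ_succ (hq : ∀ m, qPoch q q m ≠ 0) {n k : ℕ} (hk : k < n) :
    qBinom q (n + 1) (k + 1) = qBinom q n (k + 1) + q ^ (n - k) * qBinom q n k := by
  obtain ⟨e, rfl⟩ := Nat.exists_eq_add_of_lt hk
  rw [qBinom, qBinom, qBinom, show k + e + 1 + 1 - (k + 1) = e + 1 by omega,
    show k + e + 1 - (k + 1) = e by omega, show k + e + 1 - k = e + 1 by omega,
    qPoch_succ q q (k + e + 1), qPoch_succ q q e, qPoch_succ q q k]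
  have he := one_sub_pow_succ_ne_zero hq e
  have hk := one_sub_pow_succ_ne_zero hq k
  rw [pow_succ'] at he hk
  have := hq e
  have := hq k
  have := hq (k + e + 1)
  field_simp
  ring

lemma one_sub_pow_mul_qBinom_succ_succ (hq : ∀ m, qPoch q q m ≠ 0) {n k : ℕ} (hk : k ≤ n) :
    (1 - q ^ (k + 1)) * qBinom q (n + 1) (k + 1) = (1 - q ^ (n + 1)) * qBinom q n k := by
  obtain ⟨e, rfl⟩ := Nat.exists_eq_add_of_le hk
  rw [qBinom, qBinom, show k + e + 1 - (k + 1) = e by omega, show k + e - k = e by omega,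
    qPoch_succ q q (k + e), qPoch_succ q q k]
  have hk := one_sub_pow_succ_ne_zero hq k
  rw [pow_succ'] at hk
  have := hq e
  have := hq k
  have := hq (k + e)
  field_simp
  ring

end qBinom

noncomputable def qBinomTransform (q : ℝ) (a : ℕ → ℝ) (n : ℕ) : ℝ :=
  ∑ k ∈ range (n + 1), qBinom q n k * a k

section qBinomTransform

variable {q : ℝ} (a : ℕ → ℝ)

lemma qBinomTransform_succ (hq : ∀ m, qPoch q q m ≠ 0) (n : ℕ) :
    qBinomTransform q a (n + 1) =
      qBinomTransform q a n + ∑ k ∈ range (n + 1), q ^ (n - k) * qBinom q n k * a (k + 1) := by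
  have hpascal : ∀ k ∈ range n, qBinom q (n + 1) (k + 1) * a (k + 1) =
      qBinom q n (k + 1) * a (k + 1) + q ^ (n - k) * qBinom q n k * a (k + 1) := by
    intro k hk
    rw [qBinom_succ_succ hq (mem_range.mp hk)]
    ring
  rw [qBinomTransform, qBinomTransform, sum_range_succ', sum_range_succ, sum_congr rfl hpascal,
    sum_add_distrib, sum_range_succ' _ n, sum_range_succ _ n, qBinom_self hq, qBinom_self hq,
    qBinom_zero_right hq, qBinom_zero_right hq, Nat.sub_self]
  ring

variable {a} {β : ℝ}

/-- Once `a (k + 1)` is expanded by its recurrence, the factor `q^{n-k}` from `q`-Pascal makes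
every coefficient independent of `k`, and absorption turns `binom_q(n+1,k+1) a_k` into a term of
the transform at `n`. -/
lemma sum_pow_sub_mul_qBinom_mul_succ (hq : ∀ m, qPoch q q m ≠ 0)
    (ha₁ : a 1 = (q / β - 1) * a 0)
    (ha : ∀ k, a (k + 2) = (q ^ (k + 2) / β - q ^ (k + 1)) * a (k + 1) -
      (1 - q ^ (k + 1)) * q ^ (k + 1) / β * a k) (n : ℕ) :
    ∑ k ∈ range (n + 2), q ^ (n + 1 - k) * qBinom q (n + 1) k * a (k + 1) =
      (q ^ (n + 2) / β - q ^ (n + 1)) * qBinomTransform q a (n + 1) -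
        (1 - q ^ (n + 1)) * q ^ (n + 1) / β * qBinomTransform q a n := by
  have hterm : ∀ k ∈ range (n + 1),
      q ^ (n + 1 - (k + 1)) * qBinom q (n + 1) (k + 1) * a (k + 1 + 1) =
        (q ^ (n + 2) / β - q ^ (n + 1)) * (qBinom q (n + 1) (k + 1) * a (k + 1)) -
          (1 - q ^ (n + 1)) * q ^ (n + 1) / β * (qBinom q n k * a k) := by
    intro k hk
    have hkn : k ≤ n := Nat.lt_succ_iff.mp (mem_range.mp hk)
    have hpow : q ^ (n + 1 - (k + 1)) * q ^ (k + 1) = q ^ (n + 1) := pow_sub_mul_pow q (by omega)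
    have habs := one_sub_pow_mul_qBinom_succ_succ hq hkn
    rw [ha]
    linear_combination ((q / β - 1) * qBinom q (n + 1) (k + 1) * a (k + 1) -
      (1 - q ^ (k + 1)) * qBinom q (n + 1) (k + 1) * a k / β) * hpow - q ^ (n + 1) / β * a k * habs
  rw [qBinomTransform, qBinomTransform, sum_range_succ', sum_congr rfl hterm, sum_sub_distrib,
    ← mul_sum, ← mul_sum, sum_range_succ' _ (n + 1), ha₁, qBinom_zero_right hq, Nat.sub_zero]
  ring

lemma qBinomTransform_succ_succ_sub (hq : ∀ m, qPoch q q m ≠ 0)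
    (ha₁ : a 1 = (q / β - 1) * a 0)
    (ha : ∀ k, a (k + 2) = (q ^ (k + 2) / β - q ^ (k + 1)) * a (k + 1) -
      (1 - q ^ (k + 1)) * q ^ (k + 1) / β * a k) (n : ℕ) :
    qBinomTransform q a (n + 2) - q ^ (n + 2) / β * qBinomTransform q a (n + 1) =
      (1 - q ^ (n + 1)) *
        (qBinomTransform q a (n + 1) - q ^ (n + 1) / β * qBinomTransform q a n) := by
  rw [qBinomTransform_succ a hq (n + 1), sum_pow_sub_mul_qBinom_mul_succ hq ha₁ ha n]
  ring

lemma qBinomTransform_succ_eq (hq : ∀ m, qPoch q q m ≠ 0)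
    (ha₁ : a 1 = (q / β - 1) * a 0)
    (ha : ∀ k, a (k + 2) = (q ^ (k + 2) / β - q ^ (k + 1)) * a (k + 1) -
      (1 - q ^ (k + 1)) * q ^ (k + 1) / β * a k) (n : ℕ) :
    qBinomTransform q a (n + 1) = q ^ (n + 1) / β * qBinomTransform q a n := by
  rw [← sub_eq_zero]
  induction n with
  | zero =>
    simp only [qBinomTransform, zero_add, sum_range_succ, range_zero, sum_empty, pow_one,
      qBinom_zero_right hq, qBinom_self hq, ha₁]
    ring
  | succ n ih => rw [qBinomTransform_succ_succ_sub hq ha₁ ha, ih, mul_zero]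

end qBinomTransform

noncomputable def hermiteWeight (p b : ℝ) (H : ℕ → ℝ) (j : ℕ) : ℝ :=
  (-1 : ℝ) ^ j * p ^ (j * (j + 1)) * (p * b) ^ (-(j : ℤ)) * H j

section hermiteWeight

variable {p b : ℝ} {H : ℕ → ℝ}

lemma hermiteWeight_eq (hp : p ≠ 0) (j : ℕ) :
    hermiteWeight p b H j = (-1 : ℝ) ^ j * p ^ (j * j) / b ^ j * H j := by
  rw [hermiteWeight, zpow_neg, zpow_natCast, mul_pow, mul_add, mul_one, pow_add]
  field_simp

lemma hermiteWeight_one (hp : p ≠ 0) (hb : b ≠ 0)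
    (hH₁ : H 1 = 2 * ((p⁻¹ * b - p * b⁻¹) / 2) * H 0) :
    hermiteWeight p b H 1 = (p ^ 2 / b ^ 2 - 1) * hermiteWeight p b H 0 := by
  rw [hermiteWeight_eq hp, hermiteWeight_eq hp, hH₁]
  field_simp
  ring

lemma hermiteWeight_succ_succ (hp : p ≠ 0) (hb : b ≠ 0)
    (hH : ∀ k : ℕ, H (k + 2) = 2 * ((p⁻¹ * b - p * b⁻¹) / 2) * H (k + 1) -
      ((p ^ 2) ^ (-(k + 1 : ℤ)) - 1) * H k) (k : ℕ) :
    hermiteWeight p b H (k + 2) =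
      ((p ^ 2) ^ (k + 2) / b ^ 2 - (p ^ 2) ^ (k + 1)) * hermiteWeight p b H (k + 1) -
        (1 - (p ^ 2) ^ (k + 1)) * (p ^ 2) ^ (k + 1) / b ^ 2 * hermiteWeight p b H k := by
  rw [hermiteWeight_eq hp, hermiteWeight_eq hp, hermiteWeight_eq hp, hH,
    ← Nat.cast_add_one, zpow_neg, zpow_natCast]
  field_simp
  ring

lemma qBinomTransform_hermiteWeight (hp : p ≠ 0) (hb : b ≠ 0)
    (hpoch : ∀ m, qPoch (p ^ 2) (p ^ 2) m ≠ 0) (hH₀ : H 0 = 1)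
    (hH₁ : H 1 = 2 * ((p⁻¹ * b - p * b⁻¹) / 2) * H 0)
    (hH : ∀ k : ℕ, H (k + 2) = 2 * ((p⁻¹ * b - p * b⁻¹) / 2) * H (k + 1) -
      ((p ^ 2) ^ (-(k + 1 : ℤ)) - 1) * H k) (n : ℕ) :
    qBinomTransform (p ^ 2) (hermiteWeight p b H) n = p ^ (n * (n + 1)) / b ^ (2 * n) := by
  induction n with
  | zero => simp [qBinomTransform, qBinom_self hpoch, hermiteWeight, hH₀]
  | succ n ih =>
    rw [qBinomTransform_succ_eq hpoch (hermiteWeight_one hp hb hH₁)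
      (hermiteWeight_succ_succ hp hb hH), ih]
    field_simp
    ring

end hermiteWeight

/-- We write `q = p²` and `α = b²`, so that `q^{1/2} = p`, `α^{1/2} = b`, `(qα)^{1/2} = p b`
and `f(1)/2 = (p⁻¹ b - p b⁻¹)/2`. -/
theorem qinvHermite_summation_identity_general
    (p b : ℝ) (hp : p ≠ 0) (hb : b ≠ 0)
    (hpoch : ∀ m : ℕ, qPoch (p ^ 2) (p ^ 2) m ≠ 0)
    (h : ℕ → ℝ → ℝ)
    (h0 : ∀ x, h 0 x = 1)
    (h1 : ∀ x, h 1 x = 2 * x)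
    (hrec : ∀ (n : ℕ) (x : ℝ),
      h (n + 2) x = 2 * x * h (n + 1) x - ((p ^ 2) ^ (-(n + 1 : ℤ)) - 1) * h n x) :
    ∀ n : ℕ,
      (b ^ (2 * n) / p ^ (n * (n + 1))) *
        ∑ j ∈ Finset.range (n + 1),
          (-1 : ℝ) ^ j *
            (qPoch (p ^ 2) (p ^ 2) n /
              (qPoch (p ^ 2) (p ^ 2) (n - j) * qPoch (p ^ 2) (p ^ 2) j)) *
            p ^ (j * (j + 1)) * (p * b) ^ (-(j : ℤ)) *
            h j ((p⁻¹ * b - p * b⁻¹) / 2) = 1 := by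
  intro n
  set x := (p⁻¹ * b - p * b⁻¹) / 2
  have hsum := qBinomTransform_hermiteWeight (H := (h · x)) hp hb hpoch (h0 x)
    (by rw [h0, h1, mul_one]) (fun k => hrec k x) n
  calc _ = b ^ (2 * n) / p ^ (n * (n + 1)) *
        qBinomTransform (p ^ 2) (hermiteWeight p b (h · x)) n := by
        refine congrArg _ (sum_congr rfl fun j _ => ?_)
        rw [qBinom, hermiteWeight]
        ring
    _ = 1 := by
        rw [hsum]
        field_simp

/-- The summation identity of Lemma 2.10:
`(αⁿ / q^{n(n+1)/2}) Σ_{j=0}^n (-1)^j binom_q(n,j) q^{j(j+1)/2} (qα)^{-j/2} h_j(f(1)/2 | q) = 1`,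
where `f(s) = q^{-s/2} α^{1/2} - q^{s/2} α^{-1/2}` and `h_j` are the continuous
`q⁻¹`-Hermite polynomials.  We write `q = p²` and `α = b²` so that the square roots
`q^{1/2} = p`, `α^{1/2} = b`, `(qα)^{1/2} = p b` are well defined; the identity holds for any
nonzero `p`, `b` with `q = p² ≠ 1` for which the `q`-binomial coefficients are defined. -/
theorem qinvHermite_summation_identity
    (p b : ℝ) (hp : p ≠ 0) (hb : b ≠ 0) (hq1 : p ^ 2 ≠ 1)
    (hpoch : ∀ m : ℕ, qPoch (p ^ 2) (p ^ 2) m ≠ 0)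
    (h : ℕ → ℝ → ℝ)
    (h0 : ∀ x, h 0 x = 1)
    (h1 : ∀ x, h 1 x = 2 * x)
    (hrec : ∀ (n : ℕ) (x : ℝ),
      h (n + 2) x = 2 * x * h (n + 1) x - ((p ^ 2) ^ (-(n + 1 : ℤ)) - 1) * h n x) :
    ∀ n : ℕ,
      (b ^ (2 * n) / p ^ (n * (n + 1))) *
        ∑ j ∈ Finset.range (n + 1),
          (-1 : ℝ) ^ j *
            (qPoch (p ^ 2) (p ^ 2) n /
              (qPoch (p ^ 2) (p ^ 2) (n - j) * qPoch (p ^ 2) (p ^ 2) j)) *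
            p ^ (j * (j + 1)) * (p * b) ^ (-(j : ℤ)) *
            h j ((p⁻¹ * b - p * b⁻¹) / 2) = 1 :=
  qinvHermite_summation_identity_general p b hp hb hpoch h h0 h1 hrec
end

section
/- Let q ∈ (0,1) and α > 0. Define m_n = α^{-2n} q^{n(2n-1)} (1 + α^{-1} q^{2n}) / ( (-α^{-1};q)_∞ (-qα;q)_∞ (q;q)_∞ ) for n ∈ ℤ, and let m̃_n be the same expression with α replaced by α/q. Then for all n ∈ ℤ: m̃_n = (q^{2n}/(α + q^{2n})) m_n + (α/(α + q^{2(n+1)})) m_{n+1}, and m_n = (q^{2n-1}/(α + q^{2n-1})) m̃_{n-1} + (α/(α + q^{2n+1})) m̃_n. -/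
/-!
Splitting `1 + α⁻¹ q^{2n}` writes `m_n = e_{2n} + e_{2n+1}` with
`e_j = α^{-j} q^{j(j-1)/2} / Z(α)`, where `Z(α) = (-α⁻¹;q)_∞ (-qα;q)_∞ (q;q)_∞`.
Peeling off the first factor of two of the q-Pochhammer symbols gives `Z(α/q) = α Z(α)`,
and with it `m̃_n = e_{2n+1} + e_{2n+2}`. Since `e_{j+1} = (q^j/α) e_j`, the kernel weights
`q^j/(α + q^j)` and `α/(α + q^j)` split `e_j + e_{j+1}` back into its two terms, so both
identities just regroup the sequence `e` into consecutive pairs in the two possible ways.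
-/

/-- The one-point weights `m_n` of the stationary initial data for dynamic ASEP, with
normalization constant `(-α⁻¹;q)_∞ (-qα;q)_∞ (q;q)_∞` expressed via infinite products. -/
noncomputable def statWeight (q α : ℝ) (n : ℤ) : ℝ :=
  α ^ (-(2 * n)) * q ^ (n * (2 * n - 1)) * (1 + α⁻¹ * q ^ (2 * n)) /
    ((∏' k : ℕ, (1 + α⁻¹ * q ^ k)) * (∏' k : ℕ, (1 + q * α * q ^ k)) *
      (∏' k : ℕ, (1 - q * q ^ k)))

lemma tprod_one_add_mul_pow {q : ℝ} (hq : |q| < 1) (c : ℝ) :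
    ∏' k : ℕ, (1 + c * q ^ k) = (1 + c) * ∏' k : ℕ, (1 + c * q * q ^ k) := by
  have hm : Multipliable fun k : ℕ => 1 + c * q * q ^ k :=
    Real.multipliable_one_add_of_summable ((summable_geometric_of_abs_lt_one hq).mul_left _)
  rw [tprod_eq_zero_mul' (by simpa only [pow_succ', mul_assoc] using hm)]
  simp only [pow_zero, mul_one, pow_succ', mul_assoc]

noncomputable def statNorm (q α : ℝ) : ℝ :=
  (∏' k : ℕ, (1 + α⁻¹ * q ^ k)) * (∏' k : ℕ, (1 + q * α * q ^ k)) *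
    (∏' k : ℕ, (1 - q * q ^ k))

lemma statNorm_div {q α : ℝ} (hq : |q| < 1) (hq0 : q ≠ 0) (hα : α ≠ 0) :
    statNorm q (α / q) = α * statNorm q α := by
  have h₁ := tprod_one_add_mul_pow hq α⁻¹
  have h₂ := tprod_one_add_mul_pow hq α
  have h₃ : (α / q)⁻¹ = α⁻¹ * q := by rw [inv_div, div_eq_mul_inv, mul_comm]
  have h₄ : q * (α / q) = α := mul_div_cancel₀ α hq0
  simp only [statNorm, h₃, h₄]
  have h₅ : α * (1 + α⁻¹) = 1 + α := by
    rw [mul_add, mul_one, mul_inv_cancel₀ hα, add_comm]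
  rw [h₁, h₂, mul_comm α q, ← h₅]
  ring

-- The integer division is exact: `j (j - 1)` is even.
noncomputable def statTerm (q α : ℝ) (j : ℤ) : ℝ :=
  α ^ (-j) * q ^ (j * (j - 1) / 2) / statNorm q α

lemma triangular_succ (j : ℤ) : (j + 1) * (j + 1 - 1) / 2 = j * (j - 1) / 2 + j := by
  rw [show (j + 1) * (j + 1 - 1) = j * (j - 1) + j * 2 by ring,
    Int.add_mul_ediv_right _ _ two_ne_zero]

lemma statTerm_succ {q α : ℝ} (hq0 : q ≠ 0) (hα : α ≠ 0) (j : ℤ) :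
    statTerm q α (j + 1) = q ^ j / α * statTerm q α j := by
  simp only [statTerm, triangular_succ, zpow_add₀ hq0, neg_add, zpow_add₀ hα, zpow_neg_one]
  ring

lemma statTerm_div {q α : ℝ} (hq : |q| < 1) (hq0 : q ≠ 0) (hα : α ≠ 0) (j : ℤ) :
    statTerm q (α / q) j = statTerm q α (j + 1) := by
  simp only [statTerm, statNorm_div hq hq0 hα, triangular_succ, zpow_add₀ hq0, neg_add,
    zpow_add₀ hα, div_zpow, zpow_neg]
  field_simp

lemma statWeight_eq_add {q α : ℝ} (hq0 : q ≠ 0) (hα : α ≠ 0) (n : ℤ) :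
    statWeight q α n = statTerm q α (2 * n) + statTerm q α (2 * n + 1) := by
  have hexp : 2 * n * (2 * n - 1) / 2 = n * (2 * n - 1) := by
    rw [mul_assoc, Int.mul_ediv_cancel_left _ two_ne_zero]
  rw [statTerm_succ hq0 hα, statWeight, statTerm, hexp]
  unfold statNorm
  field_simp

lemma statWeight_div_eq_add {q α : ℝ} (hq : |q| < 1) (hq0 : q ≠ 0) (hα : α ≠ 0) (n : ℤ) :
    statWeight q (α / q) n = statTerm q α (2 * n + 1) + statTerm q α (2 * n + 1 + 1) := by
  rw [statWeight_eq_add hq0 (div_ne_zero hα hq0), statTerm_div hq hq0 hα, statTerm_div hq hq0 hα]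

lemma statTerm_up_split {q α : ℝ} (hq0 : q ≠ 0) (hα : α ≠ 0) {j : ℤ}
    (hj : α + q ^ j ≠ 0) :
    q ^ j / (α + q ^ j) * (statTerm q α j + statTerm q α (j + 1)) = statTerm q α (j + 1) := by
  rw [statTerm_succ hq0 hα]
  field_simp

lemma statTerm_down_split {q α : ℝ} (hq0 : q ≠ 0) (hα : α ≠ 0) {j : ℤ}
    (hj : α + q ^ j ≠ 0) :
    α / (α + q ^ j) * (statTerm q α j + statTerm q α (j + 1)) = statTerm q α j := by
  rw [statTerm_succ hq0 hα]
  field_simp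

/-- The weights `m_n` (on even heights) and `m̃_n` (on odd heights, obtained by replacing `α`
with `α/q`) are intertwined by the transition kernel of the half-stationary random walk. -/
theorem stationary_weights_intertwining
    (q α : ℝ) (hq0 : 0 < q) (hq1 : q < 1) (hα : 0 < α) :
    ∀ n : ℤ,
      (statWeight q (α / q) n =
        q ^ (2 * n) / (α + q ^ (2 * n)) * statWeight q α n +
          α / (α + q ^ (2 * (n + 1))) * statWeight q α (n + 1)) ∧
      (statWeight q α n =
        q ^ (2 * n - 1) / (α + q ^ (2 * n - 1)) * statWeight q (α / q) (n - 1) +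
          α / (α + q ^ (2 * n + 1)) * statWeight q (α / q) n) := by
  have hq : |q| < 1 := by rwa [abs_of_pos hq0]
  have hsplit (j : ℤ) : α + q ^ j ≠ 0 := by positivity
  intro n
  simp only [statWeight_div_eq_add hq hq0.ne' hα.ne', statWeight_eq_add hq0.ne' hα.ne']
  constructor
  · rw [statTerm_up_split hq0.ne' hα.ne' (hsplit _), show 2 * (n + 1) = 2 * n + 1 + 1 by ring,
      statTerm_down_split hq0.ne' hα.ne' (hsplit _)]
  · rw [show 2 * (n - 1) + 1 = 2 * n - 1 by ring, statTerm_up_split hq0.ne' hα.ne' (hsplit _),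
      statTerm_down_split hq0.ne' hα.ne' (hsplit _), sub_add_cancel]
end

section
/- Let q ∈ (0,1) and α > 0. For an integer s, the probability under the stationary measure of the local height pattern ∧ (up then down, starting and ending at height s) is P_∧ = (q^s/(α + q^s)) · (α/(α + q^{s+1})), and of the pattern ∨ (down then up) is P_∨ = (α/(α + q^s)) · (q^{s-1}/(α + q^{s-1})). Then P_∧ / P_∨ = q^{-1} (1 + α q^{-s+1}) / (1 + α q^{-s-1}), i.e., the ratio of pattern probabilities equals the ratio rate(s-1 ↦ s+1)/rate(s+1 ↦ s-1) of dynamic ASEP jump rates, so detailed balance holds. -/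
/-!
Writing `P↑(s) = q^s/(α + q^s)` and `P↓(s) = α/(α + q^s)` for the step probabilities of the
chain, `P_∧/P_∨ = (P↑(s)/P↑(s-1)) · (P↓(s+1)/P↓(s)) = q (α + q^{s-1})/(α + q^{s+1})`.
In the rate ratio `rate(s-1 ↦ s+1)/rate(s+1 ↦ s-1)` the common factor `1 + α q^{-s}` cancels,
and pulling `q^{-n}` out of `1 + α q^{-n} = q^{-n} (q^n + α)` turns what is left into the
same closed form.
-/

namespace DynamicASEP

noncomputable def stepUpProb (q α : ℝ) (s : ℤ) : ℝ := q ^ s / (α + q ^ s)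

noncomputable def stepDownProb (q α : ℝ) (s : ℤ) : ℝ := α / (α + q ^ s)

/-- Rate of the dynamic ASEP flip `s ↦ s + 2`. -/
noncomputable def rateUp (q α : ℝ) (s : ℤ) : ℝ := (1 + α * q ^ (-s)) / (1 + α * q ^ (-s - 1))

/-- Rate of the dynamic ASEP flip `s ↦ s - 2`. -/
noncomputable def rateDown (q α : ℝ) (s : ℤ) : ℝ :=
  q * (1 + α * q ^ (-s)) / (1 + α * q ^ (-s + 1))

variable {q α : ℝ}

theorem peak_div_valley (hq : 0 < q) (hα : 0 < α) (s : ℤ) :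
    stepUpProb q α s * stepDownProb q α (s + 1) /
        (stepDownProb q α s * stepUpProb q α (s - 1)) =
      q * (α + q ^ (s - 1)) / (α + q ^ (s + 1)) := by
  have hs : q ^ s = q ^ (s - 1) * q := by rw [← zpow_add_one₀ hq.ne', sub_add_cancel]
  have : 0 < q ^ (s - 1) := zpow_pos hq _
  have : 0 < q ^ (s + 1) := zpow_pos hq _
  unfold stepUpProb stepDownProb
  rw [hs]
  field_simp

theorem rateUp_sub_one_div_rateDown_add_one (hq : 0 < q) (hα : 0 ≤ α) (s : ℤ) :
    rateUp q α (s - 1) / rateDown q α (s + 1) =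
      q⁻¹ * (1 + α * q ^ (-s + 1)) / (1 + α * q ^ (-s - 1)) := by
  have : 0 < q ^ (-s) := zpow_pos hq _
  have : 0 < q ^ (-s + 1) := zpow_pos hq _
  have : 0 < q ^ (-s - 1) := zpow_pos hq _
  unfold rateUp rateDown
  rw [show -(s - 1) - 1 = -s by ring, show -(s + 1) + 1 = -s by ring,
    show -(s - 1) = -s + 1 by ring, show -(s + 1) = -s - 1 by ring]
  field_simp

theorem one_add_mul_zpow_neg (hq : q ≠ 0) (n : ℤ) :
    1 + α * q ^ (-n) = q ^ (-n) * (q ^ n + α) := by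
  rw [mul_add, zpow_neg, inv_mul_cancel₀ (zpow_ne_zero n hq)]
  ring

theorem rateRatio_eq_mul_div (hq : 0 < q) (hα : 0 ≤ α) (s : ℤ) :
    q⁻¹ * (1 + α * q ^ (-s + 1)) / (1 + α * q ^ (-s - 1)) =
      q * (α + q ^ (s - 1)) / (α + q ^ (s + 1)) := by
  rw [show -s + 1 = -(s - 1) by ring, show -s - 1 = -(s + 1) by ring,
    one_add_mul_zpow_neg hq.ne', one_add_mul_zpow_neg hq.ne', zpow_neg, zpow_neg,
    zpow_sub_one₀ hq.ne', zpow_add_one₀ hq.ne']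
  have : 0 < q ^ s := zpow_pos hq _
  field_simp
  ring

end DynamicASEP

open DynamicASEP in
theorem dynamicASEP_detailed_balance_general
    (q α : ℝ) (hq0 : 0 < q) (hα : 0 < α) (s : ℤ) :
    ((q ^ s / (α + q ^ s)) * (α / (α + q ^ (s + 1)))) /
        ((α / (α + q ^ s)) * (q ^ (s - 1) / (α + q ^ (s - 1)))) =
      q⁻¹ * (1 + α * q ^ (-s + 1)) / (1 + α * q ^ (-s - 1)) ∧
    ((q ^ s / (α + q ^ s)) * (α / (α + q ^ (s + 1)))) /
        ((α / (α + q ^ s)) * (q ^ (s - 1) / (α + q ^ (s - 1)))) =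
      ((1 + α * q ^ (-(s - 1))) / (1 + α * q ^ (-(s - 1) - 1))) /
        (q * (1 + α * q ^ (-(s + 1))) / (1 + α * q ^ (-(s + 1) + 1))) := by
  have hpattern := peak_div_valley hq0 hα s
  have hclosed := rateRatio_eq_mul_div hq0 hα.le s
  have hrates := rateUp_sub_one_div_rateDown_add_one hq0 hα.le s
  exact ⟨hpattern.trans hclosed.symm, hpattern.trans (hclosed.symm.trans hrates.symm)⟩

/-- Detailed balance for the stationary measure of dynamic ASEP: the ratio of the probabilities
of the local height patterns `∧` and `∨` at height `s` equals the ratio of the corresponding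
dynamic ASEP jump rates `rate(s-1 ↦ s+1)/rate(s+1 ↦ s-1)`. -/
theorem dynamicASEP_detailed_balance
    (q α : ℝ) (hq0 : 0 < q) (hq1 : q < 1) (hα : 0 < α) (s : ℤ) :
    ((q ^ s / (α + q ^ s)) * (α / (α + q ^ (s + 1)))) /
        ((α / (α + q ^ s)) * (q ^ (s - 1) / (α + q ^ (s - 1)))) =
      q⁻¹ * (1 + α * q ^ (-s + 1)) / (1 + α * q ^ (-s - 1)) ∧
    ((q ^ s / (α + q ^ s)) * (α / (α + q ^ (s + 1)))) /
        ((α / (α + q ^ s)) * (q ^ (s - 1) / (α + q ^ (s - 1)))) =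
      ((1 + α * q ^ (-(s - 1))) / (1 + α * q ^ (-(s - 1) - 1))) /
        (q * (1 + α * q ^ (-(s + 1))) / (1 + α * q ^ (-(s + 1) + 1))) :=
  dynamicASEP_detailed_balance_general q α hq0 hα s
end

section
/- Let α > 0 and let z_1, z_2, ... be i.i.d. Bernoulli with P(z_i = 1) = 1/(α+1), y(t) = z_1 + ... + z_t for t ≥ 1, y(t) = 0 for t ≤ 0. If integers t_1 ≤ ... ≤ t_n satisfy t_{k+1} = k for some k ∈ {0,...,n-1}, then ∏_{j=1}^n (y(t_j) - j + 1) = 0 almost surely; in particular E[ ∏_{j=1}^n (y(t_j) - j + 1) ] = 0. -/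
open MeasureTheory Finset

/-- The partial-sum path `y(t) = z_1 + … + z_t` for `t ≥ 1`, `y(t) = 0` for `t ≤ 0`. -/
noncomputable def bernoulliPath (z : ℕ → ℝ) (t : ℤ) : ℝ :=
  if 1 ≤ t then ∑ i ∈ Finset.Icc 1 t.toNat, z i else 0

/-! Since the `z i` are `0` or `1`, `y` is a nondecreasing integer-valued path with `y(k) ≤ k`.
Hence `g j = y(t_j) - j` is an integer sequence with `g 0 ≥ 0`, `g k ≤ 0`, dropping by at most one
per step, so it vanishes at some `j ≤ k`, killing the `j`-th factor of the product. -/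

theorem Int.exists_eq_zero_of_forall_sub_one_le {g : ℕ → ℤ} {k : ℕ}
    (hstep : ∀ j < k, g j - 1 ≤ g (j + 1)) (h₀ : 0 ≤ g 0) (hk : g k ≤ 0) :
    ∃ j ≤ k, g j = 0 := by
  induction k with
  | zero => exact ⟨0, le_rfl, le_antisymm hk h₀⟩
  | succ k ih =>
    by_cases hgk : g k ≤ 0
    · obtain ⟨j, hjk, hj⟩ := ih (fun j hj => hstep j (by omega)) hgk
      exact ⟨j, by omega, hj⟩
    · exact ⟨k + 1, le_rfl, by have := hstep k (by omega); omega⟩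

namespace bernoulliPath

variable {z : ℕ → ℝ}

theorem monotone (hz : ∀ i, 0 ≤ z i) : Monotone (bernoulliPath z) := by
  intro s u hsu
  unfold bernoulliPath
  split_ifs with hs hu hu
  · exact sum_le_sum_of_subset_of_nonneg (Icc_subset_Icc le_rfl (Int.toNat_le_toNat hsu))
      fun i _ _ => hz i
  · omega
  · exact sum_nonneg fun i _ => hz i
  · exact le_rfl

theorem natCast_le (hz : ∀ i, z i ≤ 1) (k : ℕ) : bernoulliPath z k ≤ k := by
  unfold bernoulliPath
  split_ifs
  · calc ∑ i ∈ Icc 1 (k : ℤ).toNat, z i ≤ ∑ _i ∈ Icc 1 (k : ℤ).toNat, (1 : ℝ) :=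
          sum_le_sum fun i _ => hz i
      _ = k := by simp
  · positivity

theorem exists_natCast_eq (hz : ∀ i, z i = 0 ∨ z i = 1) (s : ℤ) :
    ∃ m : ℕ, (m : ℝ) = bernoulliPath z s := by
  choose f hf using fun i => show ∃ m : ℕ, (m : ℝ) = z i by
    rcases hz i with h | h
    exacts [⟨0, by simp [h]⟩, ⟨1, by simp [h]⟩]
  refine ⟨if 1 ≤ s then ∑ i ∈ Icc 1 s.toNat, f i else 0, ?_⟩
  unfold bernoulliPath
  split_ifs <;> simp [hf]

theorem exists_eq_index {n : ℕ} {t : ℕ → ℤ} (hz : ∀ i, z i = 0 ∨ z i = 1)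
    (hmono : ∀ i j : ℕ, i ≤ j → j < n → t i ≤ t j) {k : ℕ} (hkn : k < n) (htk : t k = k) :
    ∃ j < n, bernoulliPath z (t j) = j := by
  have hz₀ : ∀ i, 0 ≤ z i := fun i => by rcases hz i with h | h <;> simp [h]
  have hz₁ : ∀ i, z i ≤ 1 := fun i => by rcases hz i with h | h <;> simp [h]
  choose m hm using fun j => exists_natCast_eq hz (t j)
  have hm_step : ∀ j < k, m j ≤ m (j + 1) := fun j hj => by
    have := monotone hz₀ (hmono j (j + 1) (by omega) (by omega))
    rw [← hm, ← hm] at this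
    exact_mod_cast this
  have hmk : m k ≤ k := by
    have := natCast_le hz₁ k
    rw [← htk, ← hm] at this
    exact_mod_cast this
  obtain ⟨j, hjk, hj⟩ := Int.exists_eq_zero_of_forall_sub_one_le (g := fun j => (m j : ℤ) - j)
    (fun j hj => by have := hm_step j hj; push_cast; omega) (by simp) (by omega)
  exact ⟨j, by omega, by rw [← hm j]; exact_mod_cast (show m j = j by omega)⟩

end bernoulliPath

theorem bernoulli_path_product_vanishes_general
    {Ω : Type*} [MeasurableSpace Ω] (μ : Measure Ω)
    (z : ℕ → Ω → ℝ)
    (hval : ∀ i, ∀ᵐ ω ∂μ, z i ω = 0 ∨ z i ω = 1)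
    (n : ℕ) (t : ℕ → ℤ)
    (hmono : ∀ i j : ℕ, i ≤ j → j < n → t i ≤ t j)
    (hk : ∃ k : ℕ, k < n ∧ t k = (k : ℤ)) :
    (∀ᵐ ω ∂μ, ∏ j ∈ Finset.range n, (bernoulliPath (fun i => z i ω) (t j) - j) = 0) ∧
      (∫ ω, ∏ j ∈ Finset.range n, (bernoulliPath (fun i => z i ω) (t j) - j) ∂μ) = 0 := by
  obtain ⟨k, hkn, htk⟩ := hk
  have hae : ∀ᵐ ω ∂μ, ∏ j ∈ range n, (bernoulliPath (fun i => z i ω) (t j) - j) = 0 := by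
    filter_upwards [ae_all_iff.mpr hval] with ω hω
    obtain ⟨j, hjn, hj⟩ := bernoulliPath.exists_eq_index hω hmono hkn htk
    exact prod_eq_zero (mem_range.mpr hjn) (sub_eq_zero.mpr hj)
  exact ⟨hae, integral_eq_zero_of_ae hae⟩

/-- If the Bernoulli variables take values in `{0,1}` almost surely, `t_1 ≤ ⋯ ≤ t_n` and
`t_{k+1} = k` for some `k ∈ {0,…,n-1}` (indices shifted: here `t k = k` for some `k < n`),
then `∏_{j=1}^n (y(t_j) - j + 1) = 0` almost surely, and in particular its expectation is `0`. -/
theorem bernoulli_path_product_vanishes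
    {Ω : Type*} [MeasurableSpace Ω] (μ : Measure Ω) [IsProbabilityMeasure μ]
    (α : ℝ) (hα : 0 < α)
    (z : ℕ → Ω → ℝ)
    (hval : ∀ i, ∀ᵐ ω ∂μ, z i ω = 0 ∨ z i ω = 1)
    (n : ℕ) (t : ℕ → ℤ)
    (hmono : ∀ i j : ℕ, i ≤ j → j < n → t i ≤ t j)
    (hk : ∃ k : ℕ, k < n ∧ t k = (k : ℤ)) :
    (∀ᵐ ω ∂μ, ∏ j ∈ Finset.range n, (bernoulliPath (fun i => z i ω) (t j) - j) = 0) ∧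
      (∫ ω, ∏ j ∈ Finset.range n, (bernoulliPath (fun i => z i ω) (t j) - j) ∂μ) = 0 :=
  bernoulli_path_product_vanishes_general μ z hval n t hmono hk
end

section
/- Let q ∈ (0,1), α > 0, f(s) = q^{-s/2} α^{1/2} - q^{s/2} α^{-1/2}, K the operator (Kg)(s) = (q^s/(α+q^s)) g(s+1) + (α/(α+q^s)) g(s-1), and h_n the continuous q^{-1}-Hermite polynomials. Then for every integer n ≥ 0 and every s ∈ ℤ: (K h_n(f(·)/2 | q))(s) = q^{n/2} h_n(f(s)/2 | q). -/
/-- `f(s) = q^{-s/2} α^{1/2} - q^{s/2} α^{-1/2}`. -/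
noncomputable def fEig (q α : ℝ) (s : ℤ) : ℝ :=
  Real.sqrt α * (Real.sqrt q) ^ (-s) - (Real.sqrt α)⁻¹ * (Real.sqrt q) ^ s

/-- The one-step transition operator `K` of the half-stationary random walk:
`(Kg)(s) = (q^s/(α+q^s)) g(s+1) + (α/(α+q^s)) g(s-1)`. -/
noncomputable def Kop (q α : ℝ) (g : ℤ → ℝ) (s : ℤ) : ℝ :=
  q ^ s / (α + q ^ s) * g (s + 1) + α / (α + q ^ s) * g (s - 1)

/-!
Write `f(s) = z - z⁻¹` with `z = α^{1/2} q^{-s/2}` and put `r = q^{1/2}`. Then `f(s ± 1)` is obtained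
by `z ↦ z r^{∓1}`, and the weights of `K` at `s` become `1 / (1 + z²)` and `z² / (1 + z²)`.
From the three-term recurrence, induction gives, with `x = (z - z⁻¹) / 2`,
`h_n((z r⁻¹ - r z⁻¹) / 2) = r^n h_n(x) + (r^{-n} - r^n) z h_{n-1}(x)`,
and `z ↦ -z⁻¹` gives the companion formula for `z r`, with `-z⁻¹` in place of `z`.
In the `K`-average the `h_{n-1}` terms come with `z / (1 + z²)` and `-z² z⁻¹ / (1 + z²)`, so they
cancel and only `r^n h_n(x)` survives.
-/

structure IsContinuousQInvHermite (q : ℝ) (h : ℕ → ℝ → ℝ) : Prop where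
  zero : ∀ x, h 0 x = 1
  one : ∀ x, h 1 x = 2 * x
  succ_succ : ∀ (n : ℕ) (x : ℝ),
    h (n + 2) x = 2 * x * h (n + 1) x - (q ^ (-(n + 1 : ℤ)) - 1) * h n x

lemma sq_zpow_neg_natCast_succ (r : ℝ) (n : ℕ) :
    (r ^ 2) ^ (-(n + 1 : ℤ)) = ((r ^ (n + 1))⁻¹) ^ 2 := by
  rw [zpow_neg, inv_pow, ← pow_mul, mul_comm, pow_mul]
  norm_cast

namespace IsContinuousQInvHermite

variable {r z : ℝ} {h : ℕ → ℝ → ℝ}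

theorem succ_apply_mul_inv (hH : IsContinuousQInvHermite (r ^ 2) h) (hr : r ≠ 0) (hz : z ≠ 0)
    (n : ℕ) :
    h (n + 1) ((z * r⁻¹ - (z * r⁻¹)⁻¹) / 2) =
      r ^ (n + 1) * h (n + 1) ((z - z⁻¹) / 2) +
        ((r ^ (n + 1))⁻¹ - r ^ (n + 1)) * z * h n ((z - z⁻¹) / 2) := by
  induction n using Nat.twoStepInduction with
  | zero => simp only [hH.one, hH.zero]; field_simp; ring
  | one =>
    simp only [hH.succ_succ 0, hH.one, hH.zero, sq_zpow_neg_natCast_succ]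
    field_simp; ring
  | more n ih₀ ih₁ =>
    rw [hH.succ_succ (n + 1), ih₁, ih₀, hH.succ_succ (n + 1), hH.succ_succ n,
      sq_zpow_neg_natCast_succ, sq_zpow_neg_natCast_succ]
    field_simp
    ring

theorem apply_mul_inv (hH : IsContinuousQInvHermite (r ^ 2) h) (hr : r ≠ 0) (hz : z ≠ 0)
    (n : ℕ) :
    h n ((z * r⁻¹ - (z * r⁻¹)⁻¹) / 2) =
      r ^ n * h n ((z - z⁻¹) / 2) + ((r ^ n)⁻¹ - r ^ n) * z * h (n - 1) ((z - z⁻¹) / 2) := by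
  cases n with
  | zero => simp only [hH.zero]; ring
  | succ n => exact hH.succ_apply_mul_inv hr hz n

theorem apply_mul (hH : IsContinuousQInvHermite (r ^ 2) h) (hr : r ≠ 0) (hz : z ≠ 0) (n : ℕ) :
    h n ((z * r - (z * r)⁻¹) / 2) =
      r ^ n * h n ((z - z⁻¹) / 2) - ((r ^ n)⁻¹ - r ^ n) * z⁻¹ * h (n - 1) ((z - z⁻¹) / 2) := by
  -- `z ↦ -z⁻¹` fixes `(z - z⁻¹) / 2` and turns `z * r⁻¹` into `-(z * r)⁻¹`.
  have := hH.apply_mul_inv hr (neg_ne_zero.mpr (inv_ne_zero hz)) n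
  rw [inv_neg, inv_inv, sub_neg_eq_add, neg_add_eq_sub] at this
  convert this using 3 <;> field_simp <;> ring

end IsContinuousQInvHermite

noncomputable def zEig (q α : ℝ) (s : ℤ) : ℝ :=
  Real.sqrt α * (Real.sqrt q) ^ (-s)

section

variable {q α : ℝ}

lemma fEig_eq (s : ℤ) : fEig q α s = zEig q α s - (zEig q α s)⁻¹ := by
  rw [fEig, zEig, mul_inv, zpow_neg, inv_inv]

lemma zEig_add_one (hq : 0 < q) (s : ℤ) : zEig q α (s + 1) = zEig q α s * (Real.sqrt q)⁻¹ := by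
  have : Real.sqrt q ≠ 0 := by positivity
  rw [zEig, zEig, neg_add, zpow_add₀ this, zpow_neg_one, mul_assoc]

lemma zEig_sub_one (hq : 0 < q) (s : ℤ) : zEig q α (s - 1) = zEig q α s * Real.sqrt q := by
  have : Real.sqrt q ≠ 0 := by positivity
  rw [zEig, zEig, neg_sub, sub_eq_neg_add, zpow_add₀ this, zpow_one, mul_assoc]

lemma Kop_eq (hq : 0 < q) (hα : 0 ≤ α) (g : ℤ → ℝ) (s : ℤ) :
    Kop q α g s =
      (1 + zEig q α s ^ 2)⁻¹ * g (s + 1) + zEig q α s ^ 2 / (1 + zEig q α s ^ 2) * g (s - 1) := by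
  have hqs : q ^ s = (Real.sqrt q ^ (-s))⁻¹ ^ 2 := by
    rw [zpow_neg, inv_inv, ← zpow_natCast, ← zpow_mul, mul_comm, zpow_mul, zpow_natCast,
      Real.sq_sqrt hq.le]
  have : Real.sqrt q ^ (-s) ≠ 0 := by positivity
  rw [Kop, zEig, mul_pow, Real.sq_sqrt hα, hqs]
  field_simp
  ring

end

theorem eigenrelation_qinvHermite_general
    (q α : ℝ) (hq0 : 0 < q) (hα : 0 < α)
    (h : ℕ → ℝ → ℝ)
    (h0 : ∀ x, h 0 x = 1)
    (h1 : ∀ x, h 1 x = 2 * x)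
    (hrec : ∀ (n : ℕ) (x : ℝ),
      h (n + 2) x = 2 * x * h (n + 1) x - (q ^ (-(n + 1 : ℤ)) - 1) * h n x) :
    ∀ (n : ℕ) (s : ℤ),
      Kop q α (fun s' => h n (fEig q α s' / 2)) s =
        (Real.sqrt q) ^ n * h n (fEig q α s / 2) := by
  intro n s
  have hH : IsContinuousQInvHermite (Real.sqrt q ^ 2) h := by
    rw [Real.sq_sqrt hq0.le]
    exact ⟨h0, h1, hrec⟩
  have hr : Real.sqrt q ≠ 0 := by positivity
  have hz : zEig q α s ≠ 0 := by rw [zEig]; positivity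
  simp only [Kop_eq hq0 hα.le, fEig_eq, zEig_add_one hq0, zEig_sub_one hq0,
    hH.apply_mul_inv hr hz, hH.apply_mul hr hz]
  field_simp
  ring

/-- Eigenfunction lemma: the functions `s ↦ h_n(f(s)/2 | q)` diagonalize `K` with eigenvalues
`q^{n/2}`, where `h_n` are the continuous `q⁻¹`-Hermite polynomials. -/
theorem eigenrelation_qinvHermite
    (q α : ℝ) (hq0 : 0 < q) (hq1 : q < 1) (hα : 0 < α)
    (h : ℕ → ℝ → ℝ)
    (h0 : ∀ x, h 0 x = 1)
    (h1 : ∀ x, h 1 x = 2 * x)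
    (hrec : ∀ (n : ℕ) (x : ℝ),
      h (n + 2) x = 2 * x * h (n + 1) x - (q ^ (-(n + 1 : ℤ)) - 1) * h n x) :
    ∀ (n : ℕ) (s : ℤ),
      Kop q α (fun s' => h n (fEig q α s' / 2)) s =
        (Real.sqrt q) ^ n * h n (fEig q α s / 2) :=
  eigenrelation_qinvHermite_general q α hq0 hα h h0 h1 hrec
end
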